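/- In the relay-selection dynamic program, if the stopping sets satisfy S_k ⊆ S_{k+1} ⊆ S_{k+2}, S_{k+1} ⊆ Q_{k+1}^ℓ and S_{k+2} ⊆ Q_{k+2}^ℓ for all distributions F_ℓ, and if on these stopping sets J_{k+1}(b, F_ℓ) = J_{k+2}(b, F_ℓ) = J_N(b, F_ℓ), then cc_{k+1}(b) = cc_k(b) for all b ∈ S_{k+1}, and consequently S_{k+1} ⊆ S_k. Combined with S_k ⊆ S_{k+1}, this gives S_k = S_{k+1}. -/
import Mathlib


open MeasureTheory Set

/-- Theorem 2, stage independence of stopping sets: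
with S_k = {b : -ηb ≤ cc_k(b)}, cc_k(b) = τ + E_A[J_{k+1}(b, F_L)],
Q_k^ℓ = {b : min{-ηb, cp_k(b,ℓ)} ≤ cc_k(b,ℓ)}, if S_k ⊆ S_{k+1} ⊆ S_{k+2},
S_{k+1} ⊆ Q_{k+1}^ℓ, S_{k+2} ⊆ Q_{k+2}^ℓ for all ℓ, and on S_{k+1} we have
J_{k+1}(b,F_ℓ) = J_{k+2}(b,F_ℓ) = J_N(b,F_ℓ), then cc_{k+1} = cc_k on S_{k+1},
hence S_{k+1} ⊆ S_k; combined with S_k ⊆ S_{k+1}, S_k = S_{k+1}. -/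
theorem stmt_18 {ι : Type*} [MeasurableSpace ι]
    (η δ τ : ℝ) (hη : 0 < η) (hδ : 0 < δ) (hτ : 0 < τ)
    (A : Measure ι) [IsProbabilityMeasure A]
    (JF : ℕ → ℝ → ι → ℝ)       -- J_j(b, F_ℓ)
    (JN : ℝ → ι → ℝ)           -- J_N(b, F_ℓ)
    (cpF ccF : ℕ → ℝ → ι → ℝ)  -- cp_j(b, F_ℓ), cc_j(b, F_ℓ)
    (cc : ℕ → ℝ → ℝ)           -- cc_j(b)
    (S : ℕ → Set ℝ) (Q : ℕ → ι → Set ℝ) (k : ℕ)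
    (hcc : ∀ j b, cc j b = τ + ∫ l, JF (j + 1) b l ∂A)
    (hS : ∀ j, S j = {b : ℝ | -η * b ≤ cc j b})
    (hQ : ∀ j l, Q j l = {b : ℝ | min (-η * b) (cpF j b l) ≤ ccF j b l})
    (hS01 : S k ⊆ S (k + 1)) (hS12 : S (k + 1) ⊆ S (k + 2))
    (hQ1 : ∀ l, S (k + 1) ⊆ Q (k + 1) l)
    (hQ2 : ∀ l, S (k + 2) ⊆ Q (k + 2) l)
    (hEq : ∀ b ∈ S (k + 1), ∀ l, JF (k + 1) b l = JN b l ∧ JF (k + 2) b l = JN b l) :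
    (∀ b ∈ S (k + 1), cc (k + 1) b = cc k b) ∧ S k = S (k + 1) := by
  have key : ∀ b ∈ S (k + 1), cc (k + 1) b = cc k b := by
    intro b hb
    rw [hcc, hcc]
    congr 1
    apply integral_congr_ae
    filter_upwards with l
    have h := hEq b hb l
    rw [show k + 1 + 1 = k + 2 from rfl, h.2, h.1]
  refine ⟨key, Subset.antisymm hS01 ?_⟩
  intro b hb
  rw [hS] at hb ⊢
  calc -η * b ≤ cc (k+1) b := hb
    _ = cc k b := key b (by rw [hS]; exact hb)
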